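/- arXiv:0707.1955 — 3 statements merged into one kernel-verified Lean document; each statement's English description precedes it below -/
import Mathlib

section
/- Let C be a closed convex subset of a Hilbert space H and T : C → C nonexpansive with F(T) ≠ ∅. Then F(T) equals the set of asymptotic fixed points of T; i.e., if {x_n} ⊂ C converges weakly to p and ‖Tx_n − x_n‖ → 0, then Tp = p. -/
/-!
A weakly convergent sequence is bounded (uniform boundedness), and a closed convex set is weakly
sequentially closed (test the weak limit against its metric projection onto the set), so `p ∈ C`.
Expanding `‖x n - T p‖² = ‖x n - p‖² + 2⟪x n - p, p - T p⟫ + ‖p - T p‖²` and comparing with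
`‖x n - T p‖ ≤ ‖T (x n) - x n‖ + ‖x n - p‖` bounds `‖p - T p‖²` by quantities that tend to `0`.
-/

open Filter Topology
open scoped RealInnerProductSpace

section

variable {H : Type*} [NormedAddCommGroup H] [InnerProductSpace ℝ H]

def WeakTendsto (x : ℕ → H) (p : H) : Prop :=
  ∀ v : H, Tendsto (fun n => ⟪x n, v⟫) atTop (𝓝 ⟪p, v⟫)

namespace WeakTendsto

variable {x : ℕ → H} {p : H}

theorem tendsto_inner_sub_left (h : WeakTendsto x p) (q v : H) :
    Tendsto (fun n => ⟪x n - q, v⟫) atTop (𝓝 ⟪p - q, v⟫) := by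
  simpa only [inner_sub_left] using (h v).sub_const ⟪q, v⟫

theorem exists_norm_le [CompleteSpace H] (h : WeakTendsto x p) : ∃ M, ∀ n, ‖x n‖ ≤ M := by
  obtain ⟨M, hM⟩ : ∃ M, ∀ n, ‖innerSL ℝ (x n)‖ ≤ M :=
    banach_steinhaus fun v => (h v).norm.bddAbove_range.imp fun _ hB n => hB ⟨n, rfl⟩
  exact ⟨M, fun n => by simpa only [innerSL_apply_norm] using hM n⟩

theorem mem_of_isClosed_of_convex [CompleteSpace H] {C : Set H} (hclosed : IsClosed C)
    (hconv : Convex ℝ C) (hxC : ∀ n, x n ∈ C) (h : WeakTendsto x p) : p ∈ C := by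
  obtain ⟨v, hvC, hv⟩ :=
    exists_norm_eq_iInf_of_complete_convex ⟨x 0, hxC 0⟩ hclosed.isComplete hconv p
  have hobtuse := (norm_eq_iInf_iff_real_inner_le_zero hconv hvC).mp hv
  have hnonpos : ⟪p - v, p - v⟫ ≤ 0 :=
    le_of_tendsto' (h.tendsto_inner_sub_left v (p - v)) fun n => by
      rw [real_inner_comm]
      exact hobtuse _ (hxC n)
  rw [real_inner_self_nonpos, sub_eq_zero] at hnonpos
  exact hnonpos ▸ hvC

end WeakTendsto

theorem sq_norm_sub_apply_le_of_norm_apply_sub_le {T : H → H} {x p : H}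
    (hT : ‖T x - T p‖ ≤ ‖x - p‖) :
    ‖p - T p‖ ^ 2 ≤ 2 * ‖T x - x‖ * ‖x - p‖ + ‖T x - x‖ ^ 2 - 2 * ⟪x - p, p - T p⟫ := by
  have hexpand : ‖x - T p‖ ^ 2 = ‖x - p‖ ^ 2 + 2 * ⟪x - p, p - T p⟫ + ‖p - T p‖ ^ 2 := by
    simpa only [sub_add_sub_cancel] using norm_add_sq_real (x - p) (p - T p)
  have htri : ‖x - T p‖ ≤ ‖T x - x‖ + ‖x - p‖ :=
    calc ‖x - T p‖ ≤ ‖x - T x‖ + ‖T x - T p‖ := norm_sub_le_norm_sub_add_norm_sub _ _ _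
      _ ≤ ‖T x - x‖ + ‖x - p‖ := by rw [norm_sub_rev]; gcongr
  nlinarith [pow_le_pow_left₀ (norm_nonneg _) htri 2]

end

theorem demiclosedness_principle_general
    (H : Type*) [NormedAddCommGroup H] [InnerProductSpace ℝ H] [CompleteSpace H]
    (C : Set H) (hclosed : IsClosed C) (hconv : Convex ℝ C)
    (T : H → H)
    (hne : ∀ x ∈ C, ∀ y ∈ C, ‖T x - T y‖ ≤ ‖x - y‖)
    (x : ℕ → H) (hxC : ∀ n, x n ∈ C) (p : H)
    (hweak : ∀ v : H, Filter.Tendsto (fun n => (inner ℝ (x n) v : ℝ)) Filter.atTop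
      (nhds (inner ℝ p v : ℝ)))
    (hTx : Filter.Tendsto (fun n => ‖T (x n) - x n‖) Filter.atTop (nhds 0)) :
    p ∈ C ∧ T p = p := by
  have hweak : WeakTendsto x p := hweak
  have hpC : p ∈ C := hweak.mem_of_isClosed_of_convex hclosed hconv hxC
  refine ⟨hpC, ?_⟩
  obtain ⟨M, hM⟩ := hweak.exists_norm_le
  set ε := fun n => ‖T (x n) - x n‖
  have hbound : ∀ n,
      ‖p - T p‖ ^ 2 ≤ 2 * ε n * (M + ‖p‖) + ε n ^ 2 - 2 * ⟪x n - p, p - T p⟫ := by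
    intro n
    refine (sq_norm_sub_apply_le_of_norm_apply_sub_le (hne _ (hxC n) _ hpC)).trans ?_
    have hdist : ‖x n - p‖ ≤ M + ‖p‖ := (norm_sub_le _ _).trans (by gcongr; exact hM n)
    gcongr
  have hlim : Tendsto (fun n => 2 * ε n * (M + ‖p‖) + ε n ^ 2 - 2 * ⟪x n - p, p - T p⟫)
      atTop (𝓝 0) := by
    simpa using (((hTx.const_mul 2).mul_const _).add (hTx.pow 2)).sub
      ((hweak.tendsto_inner_sub_left p (p - T p)).const_mul 2)
  have hzero : ‖p - T p‖ ^ 2 ≤ 0 := ge_of_tendsto' hlim hbound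
  rwa [sq_nonpos_iff, norm_sub_rev, norm_eq_zero, sub_eq_zero] at hzero

/-- demiclosedness principle: If `T` is nonexpansive on a closed convex
`C` with a fixed point, `x_n ∈ C` converges weakly to `p`, and `‖Tx_n − x_n‖ → 0`,
then `p ∈ C` and `Tp = p`. -/
theorem demiclosedness_principle
    (H : Type*) [NormedAddCommGroup H] [InnerProductSpace ℝ H] [CompleteSpace H]
    (C : Set H) (hclosed : IsClosed C) (hconv : Convex ℝ C)
    (T : H → H) (hT : Set.MapsTo T C C)
    (hne : ∀ x ∈ C, ∀ y ∈ C, ‖T x - T y‖ ≤ ‖x - y‖)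
    (hfix : ∃ q ∈ C, T q = q)
    (x : ℕ → H) (hxC : ∀ n, x n ∈ C) (p : H)
    (hweak : ∀ v : H, Filter.Tendsto (fun n => (inner ℝ (x n) v : ℝ)) Filter.atTop
      (nhds (inner ℝ p v : ℝ)))
    (hTx : Filter.Tendsto (fun n => ‖T (x n) - x n‖) Filter.atTop (nhds 0)) :
    p ∈ C ∧ T p = p :=
  demiclosedness_principle_general H C hclosed hconv T hne x hxC p hweak hTx
end

section
/- Let C be a nonempty bounded closed convex subset of a Hilbert space H and T : C → C a uniformly continuous asymptotically nonexpansive mapping with k_n → 1 and F(T) ≠ ∅. Let α_n, β_n ∈ [0,1] with limsup α_n < 1 and β_n → 1. Define x₀ ∈ C, z_n = β_n x_n + (1−β_n)Tⁿx_n, y_n = α_n x_n + (1−α_n)Tⁿz_n, C_n = {v ∈ C : ‖y_n − v‖² ≤ ‖x_n − v‖² + (1−α_n)(k_n²‖z_n‖² − ‖x_n‖² + (k_n²−1)M − 2⟨v, k_n²z_n − x_n⟩)}, Q_n = {v ∈ C : ⟨x₀ − x_n, x_n − v⟩ ≥ 0}, x_{n+1} = P_{C_n ∩ Q_n} x₀,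 where M > ‖v‖² for all v ∈ C. Then x_n converges strongly to P_{F(T)} x₀. -/
/-!
Fixed points of `T` lie in every `C_n ∩ Q_n`: the inequality defining `C_n` is the
asymptotic-nonexpansiveness estimate at a fixed point, and membership in `Q_n` propagates through
the variational inequality of the projection. Hence `‖x₀ - x_n‖` increases to a limit bounded by
the distance from `x₀` to `F(T)`, and `‖x_n - x_{n+1}‖ → 0`. Since `x_{n+1} ∈ C_n` and
`limsup α_n < 1`, this gives `‖x_n - Tⁿ x_n‖ → 0`, which uniform continuity upgrades to
`‖x_n - T^m x_n‖ → 0` for every `m`. A weak ultralimit `p` of `(x_n)` is then a fixed point, by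
the demiclosedness estimate `‖p - T^m p‖² ≤ (k_m² - 1) lim ‖x_n - p‖²`. Weak lower
semicontinuity of the norm forces `‖x₀ - p‖ = lim ‖x₀ - x_n‖`, and with `p ∈ Q_n` this squeezes
`‖x_n - p‖` to `0`.
-/

open Filter Topology Set Uniformity
open scoped RealInnerProductSpace

theorem tendsto_zero_of_sq_le {ι : Type*} {l : Filter ι} {a b : ι → ℝ} (ha : ∀ i, 0 ≤ a i)
    (hab : ∀ i, a i ^ 2 ≤ b i) (hb : Tendsto b l (𝓝 0)) : Tendsto a l (𝓝 0) :=
  squeeze_zero ha (fun i => Real.le_sqrt_of_sq_le (hab i)) (by simpa using hb.sqrt)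

theorem tendsto_zero_of_tendsto_one_sub_mul {ι : Type*} {l : Filter ι} {α u : ι → ℝ}
    (hα : ∀ i, α i ≤ 1) (hsup : limsup α l < 1) (hu : ∀ i, 0 ≤ u i)
    (h : Tendsto (fun i => (1 - α i) * u i) l (𝓝 0)) : Tendsto u l (𝓝 0) := by
  obtain ⟨a, hsupa, ha1⟩ := exists_between hsup
  have hαa : ∀ᶠ i in l, α i < a :=
    eventually_lt_of_limsup_lt hsupa ⟨1, eventually_map.2 (Eventually.of_forall hα)⟩
  refine squeeze_zero' (Eventually.of_forall hu) ?_ (by simpa using h.div_const (1 - a))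
  filter_upwards [hαa] with i hi
  rw [le_div_iff₀ (sub_pos.2 ha1)]
  nlinarith [hu i]

theorem Ultrafilter.exists_tendsto_of_isBounded {ι E : Type*} [PseudoMetricSpace E]
    [ProperSpace E] (𝒰 : Ultrafilter ι) {f : ι → E} (hf : Bornology.IsBounded (range f)) :
    ∃ c, Tendsto f 𝒰 (𝓝 c) := by
  obtain ⟨c, -, hc⟩ := hf.isCompact_closure.ultrafilter_le_nhds (𝒰.map f) (by
    rw [Ultrafilter.coe_map, le_principal_iff, Filter.mem_map]
    exact univ_mem' fun i => subset_closure (mem_range_self i))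
  exact ⟨c, hc⟩

theorem Function.isFixedPt_of_tendsto_iterate_of_continuousWithinAt {α : Type*}
    [TopologicalSpace α] [T2Space α] {f : α → α} {s : Set α} (hs : MapsTo f s s) {x y : α}
    (hx : x ∈ s) (hy : Tendsto (fun n => f^[n] x) atTop (𝓝 y))
    (hf : ContinuousWithinAt f s y) : IsFixedPt f y := by
  have hy' : Tendsto (fun n => f^[n] x) atTop (𝓝[s] y) :=
    tendsto_nhdsWithin_iff.2 ⟨hy, Eventually.of_forall fun n => hs.iterate n hx⟩
  refine tendsto_nhds_unique ((hf.tendsto.comp hy').congr fun n => ?_)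
    (hy.comp (tendsto_add_atTop_nat 1))
  exact (iterate_succ_apply' f n x).symm

theorem UniformContinuousOn.tendsto_norm_sub {E F : Type*} [SeminormedAddCommGroup E]
    [SeminormedAddCommGroup F] {T : E → F} {C : Set E} (hT : UniformContinuousOn T C) {ι : Type*}
    {l : Filter ι} {u w : ι → E} (hu : ∀ i, u i ∈ C) (hw : ∀ i, w i ∈ C)
    (h : Tendsto (fun i => ‖u i - w i‖) l (𝓝 0)) :
    Tendsto (fun i => ‖T (u i) - T (w i)‖) l (𝓝 0) := by
  simp only [← dist_eq_norm] at h ⊢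
  have huw : Tendsto (fun i => (u i, w i)) l (𝓤 E ⊓ 𝓟 (C ×ˢ C)) :=
    tendsto_inf.2 ⟨tendsto_uniformity_iff_dist_tendsto_zero.2 h,
      tendsto_principal.2 (Eventually.of_forall fun i => ⟨hu i, hw i⟩)⟩
  exact tendsto_uniformity_iff_dist_tendsto_zero.1 (Tendsto.comp hT huw)

section SeminormedAddCommGroup

variable {E : Type*} [SeminormedAddCommGroup E] {C : Set E} {T : E → E}

theorem tendsto_norm_sub_of_sq_le_add {x y : ℕ → E} {α e : ℕ → ℝ}
    (hα : ∀ n, α n ∈ Icc (0 : ℝ) 1)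
    (h : ∀ n, ‖y n - x (n + 1)‖ ^ 2 ≤ ‖x n - x (n + 1)‖ ^ 2 + (1 - α n) * e n)
    (he : Tendsto e atTop (𝓝 0)) (hstep : Tendsto (fun n => ‖x n - x (n + 1)‖) atTop (𝓝 0)) :
    Tendsto (fun n => ‖y n - x n‖) atTop (𝓝 0) := by
  have hnext : Tendsto (fun n => ‖y n - x (n + 1)‖) atTop (𝓝 0) := by
    refine tendsto_zero_of_sq_le (fun n => norm_nonneg _) (fun n => (h n).trans ?_)
      (by simpa using (hstep.pow 2).add he.abs)
    have h1α : 0 ≤ 1 - α n := sub_nonneg.2 (hα n).2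
    have : (1 - α n) * e n ≤ |e n| :=
      (mul_le_mul_of_nonneg_left (le_abs_self _) h1α).trans
        (mul_le_of_le_one_left (abs_nonneg _) (by linarith [(hα n).1]))
    linarith
  refine squeeze_zero (fun n => norm_nonneg _) (fun n => ?_) (by simpa using hnext.add hstep)
  rw [norm_sub_rev (x n) (x (n + 1))]
  exact norm_sub_le_norm_sub_add_norm_sub _ _ _

theorem tendsto_norm_sub_iterate_of_tendsto_norm_sub_self (hT : MapsTo T C C)
    (hucont : UniformContinuousOn T C) {ι : Type*} {l : Filter ι} {x : ι → E} (hxC : ∀ i, x i ∈ C)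
    (h : Tendsto (fun i => ‖x i - T (x i)‖) l (𝓝 0)) (m : ℕ) :
    Tendsto (fun i => ‖x i - T^[m] (x i)‖) l (𝓝 0) := by
  induction m with
  | zero => simpa using tendsto_const_nhds
  | succ m ih =>
    have hT' := hucont.tendsto_norm_sub hxC (fun i => hT.iterate m (hxC i)) ih
    refine squeeze_zero (fun i => norm_nonneg _) (fun i => ?_) (by simpa using h.add hT')
    rw [Function.iterate_succ_apply']
    exact norm_sub_le_norm_sub_add_norm_sub _ _ _

theorem tendsto_norm_sub_self_of_tendsto_norm_sub_iterate (hT : MapsTo T C C)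
    (hucont : UniformContinuousOn T C) {k : ℕ → ℝ} (hk : Tendsto k atTop (𝓝 1))
    (hane : ∀ n, ∀ u ∈ C, ∀ v ∈ C, ‖T^[n] u - T^[n] v‖ ≤ k n * ‖u - v‖)
    {x : ℕ → E} (hxC : ∀ n, x n ∈ C) (hstep : Tendsto (fun n => ‖x n - x (n + 1)‖) atTop (𝓝 0))
    (hiter : Tendsto (fun n => ‖x n - T^[n] (x n)‖) atTop (𝓝 0)) :
    Tendsto (fun n => ‖x n - T (x n)‖) atTop (𝓝 0) := by
  -- `Tⁿ x_{n+1}` is close to `x_{n+1}`, so by uniform continuity `Tⁿ⁺¹ x_{n+1}` is close to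
  -- `T x_{n+1}`.
  have hnext : Tendsto (fun n => ‖T^[n] (x (n + 1)) - x (n + 1)‖) atTop (𝓝 0) := by
    refine squeeze_zero (fun n => norm_nonneg _) (fun n => ?_)
      (by simpa using ((hk.mul hstep).add hiter).add hstep)
    calc ‖T^[n] (x (n + 1)) - x (n + 1)‖
        = ‖(T^[n] (x (n + 1)) - T^[n] (x n)) + (T^[n] (x n) - x n) + (x n - x (n + 1))‖ := by
          congr 1; abel
      _ ≤ ‖T^[n] (x (n + 1)) - T^[n] (x n)‖ + ‖T^[n] (x n) - x n‖ + ‖x n - x (n + 1)‖ :=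
          norm_add₃_le
      _ ≤ k n * ‖x n - x (n + 1)‖ + ‖x n - T^[n] (x n)‖ + ‖x n - x (n + 1)‖ := by
          rw [norm_sub_rev (T^[n] (x n)), norm_sub_rev (x n) (x (n + 1))]
          gcongr
          exact hane n _ (hxC (n + 1)) _ (hxC n)
  have hT' := hucont.tendsto_norm_sub (fun n => hT.iterate n (hxC (n + 1)))
    (fun n => hxC (n + 1)) hnext
  refine (tendsto_add_atTop_iff_nat 1).1 <| squeeze_zero (fun n => norm_nonneg _) (fun n => ?_)
    (by simpa using (hiter.comp (tendsto_add_atTop_nat 1)).add hT')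
  rw [← Function.iterate_succ_apply, Function.iterate_succ_apply']
  exact norm_sub_le_norm_sub_add_norm_sub _ _ _

variable [NormedSpace ℝ E]

theorem tendsto_norm_smul_add_one_sub_smul_sub {ι : Type*} {l : Filter ι} {β : ι → ℝ}
    {u w : ι → E} {B : ℝ} (hβ : Tendsto β l (𝓝 1)) (hB : ∀ i, ‖w i - u i‖ ≤ B) :
    Tendsto (fun i => ‖β i • u i + (1 - β i) • w i - u i‖) l (𝓝 0) := by
  have h1β : Tendsto (fun i => |1 - β i| * B) l (𝓝 0) := by
    simpa using (hβ.const_sub 1).abs.mul_const B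
  refine squeeze_zero (fun i => norm_nonneg _) (fun i => ?_) h1β
  rw [show β i • u i + (1 - β i) • w i - u i = (1 - β i) • (w i - u i) by module, norm_smul,
    Real.norm_eq_abs]
  exact mul_le_mul_of_nonneg_left (hB i) (abs_nonneg _)

theorem tendsto_norm_sub_iterate_of_ishikawa {k : ℕ → ℝ} (hk : Tendsto k atTop (𝓝 1))
    (hane : ∀ n, ∀ u ∈ C, ∀ v ∈ C, ‖T^[n] u - T^[n] v‖ ≤ k n * ‖u - v‖)
    {α : ℕ → ℝ} (hα : ∀ n, α n ≤ 1) (hαsup : limsup α atTop < 1) {x z y : ℕ → E}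
    (hxC : ∀ n, x n ∈ C) (hzC : ∀ n, z n ∈ C)
    (hy : ∀ n, y n = α n • x n + (1 - α n) • T^[n] (z n))
    (hyx : Tendsto (fun n => ‖y n - x n‖) atTop (𝓝 0))
    (hzx : Tendsto (fun n => ‖z n - x n‖) atTop (𝓝 0)) :
    Tendsto (fun n => ‖x n - T^[n] (x n)‖) atTop (𝓝 0) := by
  have hTz : Tendsto (fun n => ‖T^[n] (z n) - x n‖) atTop (𝓝 0) := by
    refine tendsto_zero_of_tendsto_one_sub_mul hα hαsup (fun n => norm_nonneg _)
      (hyx.congr fun n => ?_)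
    rw [hy, show α n • x n + (1 - α n) • T^[n] (z n) - x n = (1 - α n) • (T^[n] (z n) - x n) by
      module, norm_smul, Real.norm_of_nonneg (sub_nonneg.2 (hα n))]
  refine squeeze_zero (fun n => norm_nonneg _) (fun n => ?_) (by simpa using hTz.add (hk.mul hzx))
  calc ‖x n - T^[n] (x n)‖ ≤ ‖x n - T^[n] (z n)‖ + ‖T^[n] (z n) - T^[n] (x n)‖ :=
        norm_sub_le_norm_sub_add_norm_sub _ _ _
    _ ≤ ‖T^[n] (z n) - x n‖ + k n * ‖z n - x n‖ := by
        rw [norm_sub_rev (x n)]; gcongr; exact hane n _ (hzC n) _ (hxC n)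

end SeminormedAddCommGroup

section InnerProductSpace

variable {H : Type*} [NormedAddCommGroup H] [InnerProductSpace ℝ H]

theorem Ultrafilter.exists_tendsto_inner_of_isBounded [CompleteSpace H] {ι : Type*}
    (𝒰 : Ultrafilter ι) {x : ι → H} (hx : Bornology.IsBounded (range x)) :
    ∃ p : H, ∀ v, Tendsto (fun i => ⟪x i, v⟫) 𝒰 (𝓝 ⟪p, v⟫) := by
  -- A bounded family of functionals is relatively compact for pointwise convergence; its
  -- pointwise ultralimit is again a bounded linear functional, represented by Riesz.
  set g : ι → H →L[ℝ] ℝ := fun i => innerSL ℝ (x i)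
  have hg : Bornology.IsBounded (range g) := by
    obtain ⟨B, hB⟩ := hx.exists_norm_le
    refine isBounded_iff_forall_norm_le.2 ⟨B, forall_mem_range.2 fun i => ?_⟩
    simpa [g] using hB _ (mem_range_self i)
  obtain ⟨f, -, hf⟩ :=
    (ContinuousLinearMap.isCompact_closure_image_coe_of_bounded hg).ultrafilter_le_nhds
      (𝒰.map fun i => ⇑(g i)) (by
        rw [Ultrafilter.coe_map, le_principal_iff, Filter.mem_map]
        exact univ_mem' fun i => subset_closure ⟨g i, mem_range_self i, rfl⟩)
  refine ⟨(InnerProductSpace.toDual ℝ H).symm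
    (ContinuousLinearMap.ofTendstoOfBoundedRange f g hf hg), fun v => ?_⟩
  rw [InnerProductSpace.toDual_symm_apply]
  exact tendsto_pi_nhds.1 hf v

theorem Convex.mem_of_tendsto_inner [CompleteSpace H] {C : Set H} (hconv : Convex ℝ C)
    (hclosed : IsClosed C) {ι : Type*} {l : Filter ι} [l.NeBot] {x : ι → H} (hxC : ∀ i, x i ∈ C)
    {p : H} (hp : ∀ v, Tendsto (fun i => ⟪x i, v⟫) l (𝓝 ⟪p, v⟫)) : p ∈ C := by
  by_contra hpC
  obtain ⟨f, u, hfu, hup⟩ := geometric_hahn_banach_closed_point hconv hclosed hpC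
  have hf : ∀ y, f y = ⟪y, (InnerProductSpace.toDual ℝ H).symm f⟫ := fun y => by
    rw [real_inner_comm, InnerProductSpace.toDual_symm_apply]
  have hfp : f p ≤ u := by
    rw [hf]
    exact le_of_tendsto (hp _) (Eventually.of_forall fun i => hf (x i) ▸ (hfu _ (hxC i)).le)
  exact hup.not_ge hfp

theorem norm_le_of_tendsto_inner {ι : Type*} {l : Filter ι} [l.NeBot] {x : ι → H} {p : H}
    {r : ℝ} (hp : ∀ v, Tendsto (fun i => ⟪x i, v⟫) l (𝓝 ⟪p, v⟫)) (hx : ∀ i, ‖x i‖ ≤ r) :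
    ‖p‖ ≤ r := by
  have hr : 0 ≤ r := (norm_nonneg _).trans (hx l.nonempty_of_neBot.some)
  have : ‖p‖ ^ 2 ≤ r * ‖p‖ := by
    rw [← real_inner_self_eq_norm_sq]
    refine le_of_tendsto (hp p) (Eventually.of_forall fun i => ?_)
    exact (real_inner_le_norm _ _).trans (mul_le_mul_of_nonneg_right (hx i) (norm_nonneg _))
  nlinarith [norm_nonneg p]

theorem norm_smul_add_one_sub_smul_sq_le {a : ℝ} (ha₀ : 0 ≤ a) (ha₁ : a ≤ 1) (u w : H) :
    ‖a • u + (1 - a) • w‖ ^ 2 ≤ a * ‖u‖ ^ 2 + (1 - a) * ‖w‖ ^ 2 := by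
  have key : ‖a • u + (1 - a) • w‖ ^ 2 =
      a * ‖u‖ ^ 2 + (1 - a) * ‖w‖ ^ 2 - a * (1 - a) * ‖u - w‖ ^ 2 := by
    rw [norm_add_sq_real, norm_sub_sq_real, real_inner_smul_left, real_inner_smul_right,
      norm_smul, norm_smul, Real.norm_of_nonneg ha₀, Real.norm_of_nonneg (sub_nonneg.2 ha₁)]
    ring
  rw [key]
  nlinarith [mul_nonneg (mul_nonneg ha₀ (sub_nonneg.2 ha₁)) (sq_nonneg ‖u - w‖)]

theorem inner_nonneg_of_forall_norm_sub_le {S : Set H} (hS : Convex ℝ S) {u w v : H}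
    (hw : w ∈ S) (hmin : ∀ v ∈ S, ‖u - w‖ ≤ ‖u - v‖) (hv : v ∈ S) : 0 ≤ ⟪u - w, w - v⟫ := by
  have : Nonempty S := ⟨⟨w, hw⟩⟩
  have hinf : ‖u - w‖ = ⨅ v : S, ‖u - v‖ :=
    le_antisymm (le_ciInf fun v => hmin v v.2)
      (ciInf_le (f := fun v : S => ‖u - v‖) ⟨0, forall_mem_range.2 fun v => norm_nonneg _⟩
        ⟨w, hw⟩)
  have := (norm_eq_iInf_iff_real_inner_le_zero hS hw).1 hinf v hv
  rw [← neg_sub w v, inner_neg_right] at this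
  linarith

theorem norm_sub_sq_add_norm_sub_sq_le {x₀ x v : H} (h : 0 ≤ ⟪x₀ - x, x - v⟫) :
    ‖x₀ - x‖ ^ 2 + ‖x - v‖ ^ 2 ≤ ‖x₀ - v‖ ^ 2 := by
  rw [← sub_add_sub_cancel x₀ x v, norm_add_sq_real]
  linarith

theorem norm_sub_le_of_inner_nonneg {x₀ x v : H} (h : 0 ≤ ⟪x₀ - x, x - v⟫) :
    ‖x₀ - x‖ ≤ ‖x₀ - v‖ :=
  pow_le_pow_iff_left₀ (norm_nonneg _) (norm_nonneg _) two_ne_zero |>.1 <|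
    le_of_add_le_of_nonneg_left (norm_sub_sq_add_norm_sub_sq_le h) (sq_nonneg _)

theorem convex_setOf_norm_sub_sq_le (x y w : H) (a b : ℝ) :
    Convex ℝ {v : H | ‖y - v‖ ^ 2 ≤ ‖x - v‖ ^ 2 + a * (b - 2 * ⟪v, w⟫)} := by
  have : {v : H | ‖y - v‖ ^ 2 ≤ ‖x - v‖ ^ 2 + a * (b - 2 * ⟪v, w⟫)} =
      {v | ⟪(2 : ℝ) • (x - y) + (2 * a) • w, v⟫ ≤ ‖x‖ ^ 2 - ‖y‖ ^ 2 + a * b} := by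
    ext v
    simp only [mem_ofPred_eq, norm_sub_sq_real, inner_add_left, real_inner_smul_left,
      inner_sub_left, real_inner_comm w v]
    constructor <;> intro h <;> linarith
  rw [this]
  exact convex_halfSpace_le (innerₛₗ ℝ _).isLinear _

theorem convex_setOf_inner_sub_nonneg (u x : H) : Convex ℝ {v : H | 0 ≤ ⟪u, x - v⟫} := by
  simp only [inner_sub_right, sub_nonneg]
  exact convex_halfSpace_le (innerₛₗ ℝ u).isLinear _

theorem norm_sub_sq_le_of_tendsto_inner {ι : Type*} {l : Filter ι} [l.NeBot] {x : ι → H}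
    {p : H} {S : H → H} {K r : ℝ} (hp : ∀ v, Tendsto (fun i => ⟪x i, v⟫) l (𝓝 ⟪p, v⟫))
    (hr : Tendsto (fun i => ‖x i - p‖) l (𝓝 r))
    (hS : Tendsto (fun i => ‖x i - S (x i)‖) l (𝓝 0))
    (hK : ∀ i, ‖S (x i) - S p‖ ≤ K * ‖x i - p‖) : ‖p - S p‖ ^ 2 ≤ (K ^ 2 - 1) * r ^ 2 := by
  have hinner : Tendsto (fun i => ⟪x i - p, p - S p⟫) l (𝓝 0) := by
    simpa only [inner_sub_left, sub_self] using (hp (p - S p)).sub_const ⟪p, p - S p⟫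
  have hlhs : Tendsto (fun i => ‖x i - S p‖ ^ 2) l (𝓝 (r ^ 2 + 2 * 0 + ‖p - S p‖ ^ 2)) := by
    simp_rw [← sub_add_sub_cancel (x _) p (S p), norm_add_sq_real]
    exact ((hr.pow 2).add (hinner.const_mul 2)).add_const _
  have hrhs : Tendsto (fun i => (‖x i - S (x i)‖ + K * ‖x i - p‖) ^ 2) l (𝓝 ((0 + K * r) ^ 2)) :=
    (hS.add (hr.const_mul K)).pow 2
  have hle : r ^ 2 + 2 * 0 + ‖p - S p‖ ^ 2 ≤ (0 + K * r) ^ 2 := by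
    refine le_of_tendsto_of_tendsto' hlhs hrhs fun i => pow_le_pow_left₀ (norm_nonneg _) ?_ 2
    calc ‖x i - S p‖ ≤ ‖x i - S (x i)‖ + ‖S (x i) - S p‖ :=
          norm_sub_le_norm_sub_add_norm_sub _ _ _
      _ ≤ ‖x i - S (x i)‖ + K * ‖x i - p‖ := by gcongr; exact hK i
  linarith

theorem isFixedPt_of_tendsto_inner {C : Set H} {T : H → H} (hT : MapsTo T C C)
    (hcont : ContinuousOn T C) {k : ℕ → ℝ} (hk : Tendsto k atTop (𝓝 1))
    (hane : ∀ n, ∀ u ∈ C, ∀ v ∈ C, ‖T^[n] u - T^[n] v‖ ≤ k n * ‖u - v‖)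
    (hbdd : Bornology.IsBounded C) {ι : Type*} (𝒰 : Ultrafilter ι) {x : ι → H}
    (hxC : ∀ i, x i ∈ C) {p : H} (hpC : p ∈ C)
    (hp : ∀ v, Tendsto (fun i => ⟪x i, v⟫) 𝒰 (𝓝 ⟪p, v⟫))
    (hreg : ∀ m, Tendsto (fun i => ‖x i - T^[m] (x i)‖) 𝒰 (𝓝 0)) : Function.IsFixedPt T p := by
  obtain ⟨r, hr⟩ := 𝒰.exists_tendsto_of_isBounded (f := fun i => ‖x i - p‖) <| by
    obtain ⟨B, hB⟩ := hbdd.exists_norm_le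
    refine isBounded_iff_forall_norm_le.2 ⟨B + B, forall_mem_range.2 fun i => ?_⟩
    rw [norm_norm]
    exact (norm_sub_le _ _).trans (add_le_add (hB _ (hxC i)) (hB _ hpC))
  have hiter : Tendsto (fun m => T^[m] p) atTop (𝓝 p) := by
    rw [tendsto_iff_norm_sub_tendsto_zero]
    refine tendsto_zero_of_sq_le (fun m => norm_nonneg _) (fun m => ?_)
      (by simpa using ((hk.pow 2).sub_const 1).mul_const (r ^ 2))
    rw [norm_sub_rev]
    exact norm_sub_sq_le_of_tendsto_inner hp hr (hreg m) fun i => hane m _ (hxC i) _ hpC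
  exact Function.isFixedPt_of_tendsto_iterate_of_continuousWithinAt hT hpC hiter (hcont p hpC)

theorem exists_isFixedPt_weak_clusterPt [CompleteSpace H] {C : Set H} (hbdd : Bornology.IsBounded C)
    (hclosed : IsClosed C) (hconv : Convex ℝ C) {T : H → H} (hT : MapsTo T C C)
    (hcont : ContinuousOn T C) {k : ℕ → ℝ} (hk : Tendsto k atTop (𝓝 1))
    (hane : ∀ n, ∀ u ∈ C, ∀ v ∈ C, ‖T^[n] u - T^[n] v‖ ≤ k n * ‖u - v‖) {x : ℕ → H}
    (hxC : ∀ n, x n ∈ C) (hreg : ∀ m, Tendsto (fun n => ‖x n - T^[m] (x n)‖) atTop (𝓝 0)) :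
    ∃ p ∈ C, Function.IsFixedPt T p ∧
      ∃ 𝒰 : Ultrafilter ℕ, ∀ v, Tendsto (fun n => ⟪x n, v⟫) 𝒰 (𝓝 ⟪p, v⟫) := by
  obtain ⟨𝒰, h𝒰⟩ := exists_ultrafilter_le (atTop : Filter ℕ)
  obtain ⟨p, hp⟩ := 𝒰.exists_tendsto_inner_of_isBounded (hbdd.subset (range_subset_iff.2 hxC))
  have hpC := hconv.mem_of_tendsto_inner hclosed hxC hp
  exact ⟨p, hpC, isFixedPt_of_tendsto_inner hT hcont hk hane hbdd 𝒰 hxC hpC hp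
    fun m => (hreg m).mono_left h𝒰, 𝒰, hp⟩

/-- The bracket multiplying `1 - α_n` in the definition of `C_n`. -/
def hybridSlack (M k : ℝ) (x z v : H) : ℝ :=
  k ^ 2 * ‖z‖ ^ 2 - ‖x‖ ^ 2 + (k ^ 2 - 1) * M - 2 * ⟪v, k ^ 2 • z - x⟫

theorem norm_sub_sq_le_add_hybridSlack {x z w p : H} {α k M : ℝ} (hα₀ : 0 ≤ α) (hα₁ : α ≤ 1)
    (hk : 1 ≤ k) (hM : ‖p‖ ^ 2 ≤ M) (hw : ‖w - p‖ ≤ k * ‖z - p‖) :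
    ‖α • x + (1 - α) • w - p‖ ^ 2 ≤ ‖x - p‖ ^ 2 + (1 - α) * hybridSlack M k x z p := by
  have hconv := norm_smul_add_one_sub_smul_sq_le hα₀ hα₁ (x - p) (w - p)
  rw [show α • (x - p) + (1 - α) • (w - p) = α • x + (1 - α) • w - p by module] at hconv
  have hw2 : ‖w - p‖ ^ 2 ≤ k ^ 2 * ‖z - p‖ ^ 2 := by
    rw [← mul_pow]; exact pow_le_pow_left₀ (norm_nonneg _) hw 2
  have hslack : k ^ 2 * ‖z - p‖ ^ 2 ≤ ‖x - p‖ ^ 2 + hybridSlack M k x z p := by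
    rw [hybridSlack, norm_sub_sq_real z, norm_sub_sq_real x, inner_sub_right,
      real_inner_smul_right, real_inner_comm z, real_inner_comm x]
    nlinarith [mul_le_mul_of_nonneg_left hM (by nlinarith : (0 : ℝ) ≤ k ^ 2 - 1)]
  nlinarith [mul_le_mul_of_nonneg_left (hw2.trans hslack) (sub_nonneg.2 hα₁)]

theorem tendsto_hybridSlack {x z v : ℕ → H} {k : ℕ → ℝ} {B : ℝ} (M : ℝ) (hx : ∀ n, ‖x n‖ ≤ B)
    (hz : ∀ n, ‖z n‖ ≤ B) (hv : ∀ n, ‖v n‖ ≤ B) (hk : Tendsto k atTop (𝓝 1))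
    (hzx : Tendsto (fun n => ‖z n - x n‖) atTop (𝓝 0)) :
    Tendsto (fun n => hybridSlack M (k n) (x n) (z n) (v n)) atTop (𝓝 0) := by
  have hsplit : ∀ n, hybridSlack M (k n) (x n) (z n) (v n) =
      (k n ^ 2 - 1) * (‖z n‖ ^ 2 + M - 2 * ⟪v n, z n⟫) +
        ⟪z n + x n - (2 : ℝ) • v n, z n - x n⟫ := by
    intro n
    simp only [hybridSlack, inner_sub_left, inner_sub_right, inner_add_left, real_inner_smul_left,
      real_inner_smul_right, real_inner_self_eq_norm_sq, real_inner_comm (x n) (z n)]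
    ring
  have hk0 : Tendsto (fun n => k n ^ 2 - 1) atTop (𝓝 0) := by
    simpa using (hk.pow 2).sub_const 1
  have hfirst : Tendsto (fun n => (k n ^ 2 - 1) * (‖z n‖ ^ 2 + M - 2 * ⟪v n, z n⟫)) atTop
      (𝓝 0) := by
    refine hk0.zero_mul_isBoundedUnder_le
      (isBoundedUnder_of ⟨B ^ 2 + |M| + 2 * (B * B), fun n => ?_⟩)
    have hzn : ‖z n‖ ^ 2 ≤ B ^ 2 := pow_le_pow_left₀ (norm_nonneg _) (hz n) 2
    have hvz : |⟪v n, z n⟫| ≤ B * B := (abs_real_inner_le_norm _ _).trans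
      (mul_le_mul (hv n) (hz n) (norm_nonneg _) ((norm_nonneg _).trans (hv n)))
    simp only [Function.comp_apply, Real.norm_eq_abs]
    refine (abs_sub _ _).trans ?_
    rw [abs_mul, abs_two]
    linarith [abs_add_le (‖z n‖ ^ 2) M, abs_of_nonneg (sq_nonneg ‖z n‖)]
  have hsecond : Tendsto (fun n => ⟪z n + x n - (2 : ℝ) • v n, z n - x n⟫) atTop (𝓝 0) := by
    refine squeeze_zero_norm (fun n => (norm_inner_le_norm _ _).trans
      (mul_le_mul_of_nonneg_right ?_ (norm_nonneg _))) (by simpa using hzx.const_mul (4 * B))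
    calc ‖z n + x n - (2 : ℝ) • v n‖ ≤ ‖z n‖ + ‖x n‖ + ‖(2 : ℝ) • v n‖ :=
          norm_sub_le_of_le (norm_add_le _ _) le_rfl
      _ ≤ 4 * B := by rw [norm_smul, Real.norm_two]; linarith [hz n, hx n, hv n]
  simpa only [hsplit, add_zero] using hfirst.add hsecond

variable {x : ℕ → H} {x₀ : H}

theorem monotone_norm_sub_of_inner_nonneg (h : ∀ n, 0 ≤ ⟪x₀ - x n, x n - x (n + 1)⟫) :
    Monotone fun n => ‖x₀ - x n‖ :=
  monotone_nat_of_le_succ fun n => norm_sub_le_of_inner_nonneg (h n)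

theorem tendsto_norm_sub_succ_of_inner_nonneg (h : ∀ n, 0 ≤ ⟪x₀ - x n, x n - x (n + 1)⟫)
    (hbdd : BddAbove (range fun n => ‖x₀ - x n‖)) :
    Tendsto (fun n => ‖x n - x (n + 1)‖) atTop (𝓝 0) := by
  have hc := tendsto_atTop_ciSup (monotone_norm_sub_of_inner_nonneg h) hbdd
  have hsq : Tendsto (fun n => ‖x₀ - x (n + 1)‖ ^ 2 - ‖x₀ - x n‖ ^ 2) atTop (𝓝 0) := by
    simpa using ((hc.comp (tendsto_add_atTop_nat 1)).pow 2).sub (hc.pow 2)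
  refine tendsto_zero_of_sq_le (fun n => norm_nonneg _) (fun n => ?_) hsq
  linarith [norm_sub_sq_add_norm_sub_sq_le (h n)]

theorem tendsto_of_inner_nonneg_of_tendsto_inner (h : ∀ n, 0 ≤ ⟪x₀ - x n, x n - x (n + 1)⟫)
    {p : H} (hp : ∀ n, 0 ≤ ⟪x₀ - x n, x n - p⟫) {l : Filter ℕ} [l.NeBot]
    (hweak : ∀ v, Tendsto (fun n => ⟪x n, v⟫) l (𝓝 ⟪p, v⟫)) : Tendsto x atTop (𝓝 p) := by
  have hbdd : BddAbove (range fun n => ‖x₀ - x n‖) :=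
    ⟨‖x₀ - p‖, forall_mem_range.2 fun n => norm_sub_le_of_inner_nonneg (hp n)⟩
  have hc := tendsto_atTop_ciSup (monotone_norm_sub_of_inner_nonneg h) hbdd
  have hd : ‖x₀ - p‖ = ⨆ n, ‖x₀ - x n‖ := le_antisymm
    (norm_le_of_tendsto_inner (l := l) (fun v => by
      simpa only [inner_sub_left] using tendsto_const_nhds.sub (hweak v)) (le_ciSup hbdd))
    (ciSup_le fun n => norm_sub_le_of_inner_nonneg (hp n))
  rw [← hd] at hc
  have hsq : Tendsto (fun n => ‖x₀ - p‖ ^ 2 - ‖x₀ - x n‖ ^ 2) atTop (𝓝 0) := by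
    have := (hc.pow 2).const_sub (‖x₀ - p‖ ^ 2)
    rwa [sub_self] at this
  rw [tendsto_iff_norm_sub_tendsto_zero]
  refine tendsto_zero_of_sq_le (fun n => norm_nonneg _) (fun n => ?_) hsq
  linarith [norm_sub_sq_add_norm_sub_sq_le (hp n)]

theorem inner_nonneg_of_hybrid_projection {C : Set H} {A Q : ℕ → Set H} {p : H} (hx₀ : x 0 = x₀)
    (hpC : p ∈ C) (hQ : ∀ n, Q n = {v ∈ C | 0 ≤ ⟪x₀ - x n, x n - v⟫})
    (hAQ : ∀ n, Convex ℝ (A n ∩ Q n)) (hpA : ∀ n, p ∈ A n)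
    (hx : ∀ n, x (n + 1) ∈ A n ∩ Q n ∧ ∀ v ∈ A n ∩ Q n, ‖x₀ - x (n + 1)‖ ≤ ‖x₀ - v‖) :
    ∀ n, 0 ≤ ⟪x₀ - x n, x n - p⟫
  | 0 => by simp [hx₀]
  | n + 1 => inner_nonneg_of_forall_norm_sub_le (hAQ n) (hx n).1 (hx n).2
      ⟨hpA n, (hQ n).symm.subset ⟨hpC, inner_nonneg_of_hybrid_projection hx₀ hpC hQ hAQ hpA hx n⟩⟩

end InnerProductSpace

theorem hybrid_ishikawa_strong_convergence_general
    (H : Type*) [NormedAddCommGroup H] [InnerProductSpace ℝ H] [CompleteSpace H]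
    (C : Set H) (hbdd : Bornology.IsBounded C)
    (hclosed : IsClosed C) (hconv : Convex ℝ C)
    (T : H → H) (hT : Set.MapsTo T C C)
    (hucont : UniformContinuousOn T C)
    (k : ℕ → ℝ) (hk1 : ∀ n, 1 ≤ k n) (hklim : Filter.Tendsto k Filter.atTop (nhds 1))
    (hane : ∀ n : ℕ, ∀ u ∈ C, ∀ v ∈ C, ‖T^[n] u - T^[n] v‖ ≤ k n * ‖u - v‖)
    (α β : ℕ → ℝ) (hα : ∀ n, α n ∈ Set.Icc (0:ℝ) 1) (hβ : ∀ n, β n ∈ Set.Icc (0:ℝ) 1)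
    (hαsup : Filter.limsup α Filter.atTop < 1)
    (hβlim : Filter.Tendsto β Filter.atTop (nhds 1))
    (M : ℝ) (hM : ∀ v ∈ C, ‖v‖ ^ 2 < M)
    (x z y : ℕ → H) (x₀ : H) (hx₀ : x 0 = x₀) (hx₀C : x₀ ∈ C)
    (hz : ∀ n, z n = β n • x n + (1 - β n) • T^[n] (x n))
    (hy : ∀ n, y n = α n • x n + (1 - α n) • T^[n] (z n))
    (Cs Qs : ℕ → Set H)
    (hCs : ∀ n, Cs n = {v ∈ C | ‖y n - v‖ ^ 2 ≤ ‖x n - v‖ ^ 2 +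
        (1 - α n) * ((k n) ^ 2 * ‖z n‖ ^ 2 - ‖x n‖ ^ 2 + ((k n) ^ 2 - 1) * M
          - 2 * (inner ℝ v ((k n) ^ 2 • z n - x n) : ℝ))})
    (hQs : ∀ n, Qs n = {v ∈ C | (inner ℝ (x₀ - x n) (x n - v) : ℝ) ≥ 0})
    (hxproj : ∀ n, x (n + 1) ∈ Cs n ∩ Qs n ∧
        ∀ v ∈ Cs n ∩ Qs n, ‖x₀ - x (n + 1)‖ ≤ ‖x₀ - v‖) :
    ∃ q, (q ∈ C ∧ T q = q) ∧ (∀ p ∈ C, T p = p → ‖x₀ - q‖ ≤ ‖x₀ - p‖) ∧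
      Filter.Tendsto x Filter.atTop (nhds q) := by
  obtain ⟨B, hB⟩ := hbdd.exists_norm_le
  have hxC : ∀ n, x n ∈ C
    | 0 => hx₀ ▸ hx₀C
    | n + 1 => ((hQs n).subset (hxproj n).1.2).1
  have hzC : ∀ n, z n ∈ C := fun n => hz n ▸ hconv (hxC n) (hT.iterate n (hxC n)) (hβ n).1
    (sub_nonneg.2 (hβ n).2) (add_sub_cancel _ _)
  have hS : ∀ n, Convex ℝ (Cs n ∩ Qs n) := fun n => by
    rw [hCs, hQs]
    exact (hconv.inter (convex_setOf_norm_sub_sq_le _ _ _ _ _)).inter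
      (hconv.inter (convex_setOf_inner_sub_nonneg _ _))
  have hFC : ∀ p ∈ C, T p = p → ∀ n, p ∈ Cs n := fun p hpC hTp n => (hCs n).symm.subset
    ⟨hpC, hy n ▸ norm_sub_sq_le_add_hybridSlack (hα n).1 (hα n).2 (hk1 n) (hM p hpC).le
      (by simpa only [Function.iterate_fixed hTp n] using hane n _ (hzC n) _ hpC)⟩
  have hFQ : ∀ p ∈ C, T p = p → ∀ n, 0 ≤ ⟪x₀ - x n, x n - p⟫ := fun p hpC hTp =>
    inner_nonneg_of_hybrid_projection hx₀ hpC hQs hS (hFC p hpC hTp) hxproj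
  have hQ : ∀ n, 0 ≤ ⟪x₀ - x n, x n - x (n + 1)⟫ := fun n => ((hQs n).subset (hxproj n).1.2).2
  have hdist : ∀ u ∈ C, ∀ v ∈ C, ‖u - v‖ ≤ B + B := fun u hu v hv =>
    (norm_sub_le _ _).trans (add_le_add (hB u hu) (hB v hv))
  have hstep := tendsto_norm_sub_succ_of_inner_nonneg hQ
    ⟨B + B, forall_mem_range.2 fun n => hdist _ hx₀C _ (hxC n)⟩
  have hzx : Tendsto (fun n => ‖z n - x n‖) atTop (𝓝 0) := by
    simpa only [← hz] using tendsto_norm_smul_add_one_sub_smul_sub hβlim fun n =>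
      hdist _ (hT.iterate n (hxC n)) _ (hxC n)
  have hyx := tendsto_norm_sub_of_sq_le_add hα (fun n => ((hCs n).subset (hxproj n).1.1).2)
    (tendsto_hybridSlack M (fun n => hB _ (hxC n)) (fun n => hB _ (hzC n))
      (fun n => hB _ (hxC (n + 1))) hklim hzx) hstep
  have hreg := tendsto_norm_sub_iterate_of_tendsto_norm_sub_self hT hucont hxC <|
    tendsto_norm_sub_self_of_tendsto_norm_sub_iterate hT hucont hklim hane hxC hstep <|
      tendsto_norm_sub_iterate_of_ishikawa hklim hane (fun n => (hα n).2) hαsup hxC hzC hy hyx hzx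
  obtain ⟨p, hpC, hTp, 𝒰, hp⟩ :=
    exists_isFixedPt_weak_clusterPt hbdd hclosed hconv hT hucont.continuousOn hklim hane hxC hreg
  have hlim := tendsto_of_inner_nonneg_of_tendsto_inner hQ (hFQ p hpC hTp) hp
  refine ⟨p, ⟨hpC, hTp⟩, fun q hqC hTq => ?_, hlim⟩
  exact le_of_tendsto' (tendsto_const_nhds.sub hlim).norm fun n =>
    norm_sub_le_of_inner_nonneg (hFQ q hqC hTq n)

/-- Theorem 3.1: strong convergence of the modified Ishikawa hybrid
projection algorithm for uniformly continuous asymptotically nonexpansive mappings. -/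
theorem hybrid_ishikawa_strong_convergence
    (H : Type*) [NormedAddCommGroup H] [InnerProductSpace ℝ H] [CompleteSpace H]
    (C : Set H) (hne : C.Nonempty) (hbdd : Bornology.IsBounded C)
    (hclosed : IsClosed C) (hconv : Convex ℝ C)
    (T : H → H) (hT : Set.MapsTo T C C)
    (hucont : UniformContinuousOn T C)
    (k : ℕ → ℝ) (hk1 : ∀ n, 1 ≤ k n) (hklim : Filter.Tendsto k Filter.atTop (nhds 1))
    (hane : ∀ n : ℕ, ∀ u ∈ C, ∀ v ∈ C, ‖T^[n] u - T^[n] v‖ ≤ k n * ‖u - v‖)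
    (hfix : {q ∈ C | T q = q}.Nonempty)
    (α β : ℕ → ℝ) (hα : ∀ n, α n ∈ Set.Icc (0:ℝ) 1) (hβ : ∀ n, β n ∈ Set.Icc (0:ℝ) 1)
    (hαsup : Filter.limsup α Filter.atTop < 1)
    (hβlim : Filter.Tendsto β Filter.atTop (nhds 1))
    (M : ℝ) (hM : ∀ v ∈ C, ‖v‖ ^ 2 < M)
    (x z y : ℕ → H) (x₀ : H) (hx₀ : x 0 = x₀) (hx₀C : x₀ ∈ C)
    (hz : ∀ n, z n = β n • x n + (1 - β n) • T^[n] (x n))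
    (hy : ∀ n, y n = α n • x n + (1 - α n) • T^[n] (z n))
    (Cs Qs : ℕ → Set H)
    (hCs : ∀ n, Cs n = {v ∈ C | ‖y n - v‖ ^ 2 ≤ ‖x n - v‖ ^ 2 +
        (1 - α n) * ((k n) ^ 2 * ‖z n‖ ^ 2 - ‖x n‖ ^ 2 + ((k n) ^ 2 - 1) * M
          - 2 * (inner ℝ v ((k n) ^ 2 • z n - x n) : ℝ))})
    (hQs : ∀ n, Qs n = {v ∈ C | (inner ℝ (x₀ - x n) (x n - v) : ℝ) ≥ 0})
    (hxproj : ∀ n, x (n + 1) ∈ Cs n ∩ Qs n ∧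
        ∀ v ∈ Cs n ∩ Qs n, ‖x₀ - x (n + 1)‖ ≤ ‖x₀ - v‖) :
    ∃ q, (q ∈ C ∧ T q = q) ∧ (∀ p ∈ C, T p = p → ‖x₀ - q‖ ≤ ‖x₀ - p‖) ∧
      Filter.Tendsto x Filter.atTop (nhds q) :=
  hybrid_ishikawa_strong_convergence_general H C hbdd hclosed hconv T hT hucont k hk1 hklim hane α β
    hα hβ hαsup hβlim M hM x z y x₀ hx₀ hx₀C hz hy Cs Qs hCs hQs hxproj
end

section
/- Let H be a Hilbert space, C ⊆ H bounded, T : C → C with ‖Tⁿx − Tⁿy‖ ≤ k_n‖x − y‖ for all n and x, y ∈ C, where sup_n k_n < ∞. Suppose {x_n} ⊂ C satisfies ‖Tⁿx_n − x_n‖ → 0 and ‖x_{n+1} − x_n‖ → 0, and T is uniformly continuous. Then ‖Tx_n − x_n‖ → 0. -/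
/-- if `T` is uniformly continuous on bounded `C` with uniformly bounded
iterate Lipschitz constants, `‖Tⁿx_n − x_n‖ → 0` and `‖x_{n+1} − x_n‖ → 0`, then
`‖Tx_n − x_n‖ → 0`. -/
theorem asymptotic_to_true_fixed_point_approx
    (H : Type*) [NormedAddCommGroup H] [InnerProductSpace ℝ H] [CompleteSpace H]
    (C : Set H) (hbdd : Bornology.IsBounded C)
    (T : H → H) (hT : Set.MapsTo T C C)
    (k : ℕ → ℝ)
    (hane : ∀ n : ℕ, ∀ u ∈ C, ∀ v ∈ C, ‖T^[n] u - T^[n] v‖ ≤ k n * ‖u - v‖)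
    (L : ℝ) (hL : ∀ n, k n ≤ L)
    (hucont : UniformContinuousOn T C)
    (x : ℕ → H) (hxC : ∀ n, x n ∈ C)
    (h1 : Filter.Tendsto (fun n => ‖T^[n] (x n) - x n‖) Filter.atTop (nhds 0))
    (h2 : Filter.Tendsto (fun n => ‖x (n + 1) - x n‖) Filter.atTop (nhds 0)) :
    Filter.Tendsto (fun n => ‖T (x n) - x n‖) Filter.atTop (nhds 0) := by
  -- a_n = ‖T x_n - T (T^[n] x_n)‖ → 0 by uniform continuity
  have ha : Filter.Tendsto (fun n => ‖T (x n) - T (T^[n] (x n))‖)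
      Filter.atTop (nhds 0) := by
    rw [Metric.uniformContinuousOn_iff] at hucont
    rw [Metric.tendsto_atTop] at h1 ⊢
    intro ε hε
    obtain ⟨δ, hδ, hδ'⟩ := hucont ε hε
    obtain ⟨N, hN⟩ := h1 δ hδ
    refine ⟨N, fun n hn => ?_⟩
    have h := hN n hn
    rw [Real.dist_eq, sub_zero, abs_of_nonneg (norm_nonneg _)] at h ⊢
    have : dist (x n) (T^[n] (x n)) < δ := by
      rw [dist_eq_norm, ← norm_neg]; simpa using h
    have := hδ' (x n) (hxC n) (T^[n] (x n)) (hT.iterate n (hxC n)) this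
    rwa [dist_eq_norm] at this
  -- shifted h1
  have hc : Filter.Tendsto (fun n => ‖T^[n + 1] (x (n + 1)) - x (n + 1)‖)
      Filter.atTop (nhds 0) := h1.comp (Filter.tendsto_add_atTop_nat 1)
  have hg : Filter.Tendsto (fun n => ‖T (x n) - T (T^[n] (x n))‖
      + max L 0 * ‖x (n + 1) - x n‖ + ‖T^[n + 1] (x (n + 1)) - x (n + 1)‖
      + ‖x (n + 1) - x n‖) Filter.atTop (nhds 0) := by
    have := ((ha.add (h2.const_mul (max L 0))).add hc).add h2
    simpa using this
  refine squeeze_zero (fun n => norm_nonneg _) (fun n => ?_) hg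
  have key : T (x n) - x n = (T (x n) - T (T^[n] (x n)))
      + (T^[n + 1] (x n) - T^[n + 1] (x (n + 1)))
      + (T^[n + 1] (x (n + 1)) - x (n + 1)) + (x (n + 1) - x n) := by
    rw [Function.iterate_succ_apply' T n (x n)]
    abel
  rw [key]
  have h4 : ‖T (x n) - T (T^[n] (x n))
      + (T^[n + 1] (x n) - T^[n + 1] (x (n + 1)))
      + (T^[n + 1] (x (n + 1)) - x (n + 1)) + (x (n + 1) - x n)‖
      ≤ ‖T (x n) - T (T^[n] (x n))‖ + ‖T^[n + 1] (x n) - T^[n + 1] (x (n + 1))‖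
      + ‖T^[n + 1] (x (n + 1)) - x (n + 1)‖ + ‖x (n + 1) - x n‖ := by
    refine le_trans (norm_add_le _ _) ?_
    gcongr
    refine le_trans (norm_add_le _ _) ?_
    gcongr
    exact norm_add_le _ _
  refine le_trans h4 ?_
  gcongr
  calc ‖T^[n + 1] (x n) - T^[n + 1] (x (n + 1))‖
      ≤ k (n + 1) * ‖x n - x (n + 1)‖ := hane (n + 1) _ (hxC n) _ (hxC (n + 1))
    _ ≤ max L 0 * ‖x (n + 1) - x n‖ := by
        rw [norm_sub_rev]
        exact mul_le_mul_of_nonneg_right (le_max_of_le_left (hL _)) (norm_nonneg _)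
end
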